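/- arXiv:2406.06348 — 5 statements merged into one kernel-verified Lean document; each statement's English description precedes it below -/
import Mathlib

section
/- Let G* be a DAG and S a subset of its vertices with u, v ∈ S non-adjacent in G*. Then any path Π between u and v entirely contained in S with length greater than 1 is not an inducing path relative to V \ S. -/
/-!
The second and the penultimate vertex of the path are colliders, so the path starts with
`π 0 → π 1` and ends with `π (n - 1) ← π n`. Each of these two vertices must also be an ancestor
of an endpoint, and every combination of the two ancestor relations closes a directed cycle.
-/

/-- The condition for a path `π` of length `n` (with endpoints `π 0` and `π n`)
to be an inducing path relative to `V \ S` in `E`: every non-endpoint vertex in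
`S` is a collider on the path and an ancestor of one of the endpoints. -/
def InducingCond {V : Type*} (E : V → V → Prop) (S : Set V) (n : ℕ) (π : ℕ → V) : Prop :=
  ∀ i, 0 < i → i < n → π i ∈ S →
    (E (π (i - 1)) (π i) ∧ E (π (i + 1)) (π i)) ∧
    (Relation.TransGen E (π i) (π 0) ∨ Relation.TransGen E (π i) (π n))

open Relation

theorem not_transGen_of_rel_of_acyclic {V : Type*} {E : V → V → Prop}
    (hacyc : ∀ x, ¬ TransGen E x x) {a b : V} (hab : E a b) : ¬ TransGen E b a :=
  fun hba => hacyc a (.head hab hba)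

theorem not_inducingCond_of_acyclic {V : Type*} {E : V → V → Prop} {S : Set V}
    (hacyc : ∀ x, ¬ TransGen E x x) {n : ℕ} (hn : 1 < n) {π : ℕ → V}
    (hsecond : π 1 ∈ S) (hpenult : π (n - 1) ∈ S) : ¬ InducingCond E S n π := by
  intro hind
  obtain ⟨⟨hfirst, -⟩, hanc₁⟩ := hind 1 one_pos hn hsecond
  obtain ⟨⟨-, hlast⟩, hanc₂⟩ := hind (n - 1) (by omega) (by omega) hpenult
  rw [Nat.sub_add_cancel hn.le] at hlast
  rcases hanc₂ with hanc₂ | hanc₂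
  · rcases hanc₁ with hanc₁ | hanc₁
    · exact not_transGen_of_rel_of_acyclic hacyc hfirst hanc₁
    · exact hacyc (π n) (.head hlast (hanc₂.tail hfirst |>.trans hanc₁))
  · exact not_transGen_of_rel_of_acyclic hacyc hlast hanc₂

theorem stmt1_general {V : Type*} (E : V → V → Prop) (S : Set V)
    (hacyc : ∀ x, ¬ Relation.TransGen E x x)
    (n : ℕ) (hn : 1 < n) (π : ℕ → V)
    (hinS : ∀ i ≤ n, π i ∈ S) :
    ¬ InducingCond E S n π :=
  not_inducingCond_of_acyclic hacyc hn (hinS 1 hn.le) (hinS (n - 1) (Nat.sub_le n 1))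

/-- Any path between non-adjacent `u, v ∈ S`, entirely contained in `S`,
of length greater than 1, is not an inducing path relative to `V \ S`. -/
theorem stmt1 {V : Type*} (E : V → V → Prop) (S : Set V)
    (hacyc : ∀ x, ¬ Relation.TransGen E x x)
    (u v : V) (hu : u ∈ S) (hv : v ∈ S)
    (hnadj : ¬ (E u v ∨ E v u))
    (n : ℕ) (hn : 1 < n) (π : ℕ → V)
    (h0 : π 0 = u) (hend : π n = v)
    (hinj : ∀ i ≤ n, ∀ j ≤ n, π i = π j → i = j)
    (hadj : ∀ i < n, E (π i) (π (i + 1)) ∨ E (π (i + 1)) (π i))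
    (hinS : ∀ i ≤ n, π i ∈ S) :
    ¬ InducingCond E S n π :=
  stmt1_general E S hacyc n hn π hinS
end

section
/- Let G* be a DAG, S a subset of vertices, and u, v ∈ S non-adjacent in G*. Any path Π = (u, q_1, ..., q_k, v) between u and v such that {u, q_1, q_2} ⊆ S or {q_{k-1}, q_k, v} ⊆ S is not an inducing path between u and v relative to V \ S. -/
theorem InducingCond.not_mem_succ_of_mem {V : Type*} {E : V → V → Prop} {S : Set V} {n : ℕ}
    {π : ℕ → V} (hacyc : ∀ x, ¬ Relation.TransGen E x x) (h : InducingCond E S n π) {i : ℕ}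
    (hi : 0 < i) (hin : i + 1 < n) (hmem : π i ∈ S) : π (i + 1) ∉ S := by
  intro hmem_succ
  have into_i : E (π (i + 1)) (π i) := (h i hi (by omega) hmem).1.2
  have into_succ : E (π i) (π (i + 1)) := by
    simpa using (h (i + 1) (by omega) hin hmem_succ).1.1
  exact hacyc _ (.head into_i (.single into_succ))

theorem stmt2_general {V : Type*} (E : V → V → Prop) (S : Set V)
    (hacyc : ∀ x, ¬ Relation.TransGen E x x)
    (n : ℕ) (hn : 3 ≤ n) (π : ℕ → V)
    (hpre : (π 0 ∈ S ∧ π 1 ∈ S ∧ π 2 ∈ S) ∨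
            (π (n - 2) ∈ S ∧ π (n - 1) ∈ S ∧ π n ∈ S)) :
    ¬ InducingCond E S n π := by
  intro h
  rcases hpre with ⟨-, h1, h2⟩ | ⟨h1, h2, -⟩
  · exact h.not_mem_succ_of_mem hacyc one_pos (by omega) h1 h2
  · have hsucc : n - 2 + 1 = n - 1 := by omega
    exact h.not_mem_succ_of_mem hacyc (by omega) (by omega) h1 (hsucc ▸ h2)

/-- Any path `Π = (u, q_1, …, q_k, v)` between non-adjacent `u, v ∈ S` such that
`{u, q_1, q_2} ⊆ S` or `{q_{k-1}, q_k, v} ⊆ S` is not an inducing path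
relative to `V \ S`. -/
theorem stmt2 {V : Type*} (E : V → V → Prop) (S : Set V)
    (hacyc : ∀ x, ¬ Relation.TransGen E x x)
    (u v : V) (hu : u ∈ S) (hv : v ∈ S)
    (hnadj : ¬ (E u v ∨ E v u))
    (n : ℕ) (hn : 3 ≤ n) (π : ℕ → V)
    (h0 : π 0 = u) (hend : π n = v)
    (hinj : ∀ i ≤ n, ∀ j ≤ n, π i = π j → i = j)
    (hadj : ∀ i < n, E (π i) (π (i + 1)) ∨ E (π (i + 1)) (π i))
    (hpre : (π 0 ∈ S ∧ π 1 ∈ S ∧ π 2 ∈ S) ∨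
            (π (n - 2) ∈ S ∧ π (n - 1) ∈ S ∧ π n ∈ S)) :
    ¬ InducingCond E S n π :=
  stmt2_general E S hacyc n hn π hpre
end

section
/- Let G* be a DAG, S a subset of vertices, and u, v ∈ S non-adjacent in G*. If Π = (u, q_1, ..., q_k, v) is an inducing path between u and v relative to V \ S with q_1 ∈ S and q_k ∈ S (and q_1 ≠ q_k), then q_1 is an ancestor of v in G*, v is an ancestor of q_k in G*, u is an ancestor of q_1, and q_k is an ancestor of u — a contradiction with acyclicity. Hence no such inducing path exists. -/
namespace InducingCond

variable {V : Type*} {E : V → V → Prop} {S : Set V} {n : ℕ} {π : ℕ → V}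

theorem transGen_first_last (hacyc : ∀ x, ¬ Relation.TransGen E x x)
    (hind : InducingCond E S n π) (hn : 1 < n) (h1 : π 1 ∈ S) :
    Relation.TransGen E (π 0) (π n) := by
  obtain ⟨⟨hedge, -⟩, hanc⟩ := hind 1 one_pos hn h1
  have hanc_last : Relation.TransGen E (π 1) (π n) :=
    hanc.resolve_left fun hback => hacyc (π 0) (hback.head hedge)
  exact hanc_last.head hedge

theorem transGen_last_first (hacyc : ∀ x, ¬ Relation.TransGen E x x)
    (hind : InducingCond E S n π) (hn : 1 < n) (hk : π (n - 1) ∈ S) :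
    Relation.TransGen E (π n) (π 0) := by
  obtain ⟨⟨-, hedge⟩, hanc⟩ := hind (n - 1) (by omega) (by omega) hk
  rw [Nat.sub_add_cancel (by omega : 1 ≤ n)] at hedge
  have hanc_first : Relation.TransGen E (π (n - 1)) (π 0) :=
    hanc.resolve_right fun hback => hacyc (π n) (hback.head hedge)
  exact hanc_first.head hedge

end InducingCond

theorem stmt4_general {V : Type*} (E : V → V → Prop) (S : Set V)
    (hacyc : ∀ x, ¬ Relation.TransGen E x x)
    (n : ℕ) (hn : 3 ≤ n) (π : ℕ → V)
    (hq1 : π 1 ∈ S) (hqk : π (n - 1) ∈ S)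
    (hind : InducingCond E S n π) :
    False :=
  hacyc (π 0) <| (hind.transGen_first_last hacyc (by omega) hq1).trans
    (hind.transGen_last_first hacyc (by omega) hqk)

/-- If `Π = (u, q_1, …, q_k, v)` is an inducing path relative to `V \ S`
between non-adjacent `u, v ∈ S` with `q_1 ∈ S` and `q_k ∈ S` (and `q_1 ≠ q_k`),
then `u` is an ancestor of `q_1`, `q_1` of `v`, `v` of `q_k`, and `q_k` of `u`
— contradicting acyclicity. Hence no such inducing path exists. -/
theorem stmt4 {V : Type*} (E : V → V → Prop) (S : Set V)
    (hacyc : ∀ x, ¬ Relation.TransGen E x x)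
    (u v : V) (hu : u ∈ S) (hv : v ∈ S)
    (hnadj : ¬ (E u v ∨ E v u))
    (n : ℕ) (hn : 3 ≤ n) (π : ℕ → V)
    (h0 : π 0 = u) (hend : π n = v)
    (hinj : ∀ i ≤ n, ∀ j ≤ n, π i = π j → i = j)
    (hadj : ∀ i < n, E (π i) (π (i + 1)) ∨ E (π (i + 1)) (π i))
    (hq1 : π 1 ∈ S) (hqk : π (n - 1) ∈ S) (hne : π 1 ≠ π (n - 1))
    (hind : InducingCond E S n π) :
    False :=
  stmt4_general E S hacyc n hn π hq1 hqk hind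
end

section
/- Let G* be a DAG whose underlying undirected graph is a subgraph of an undirected superstructure G (on the same vertex set), and let {S_1, ..., S_N} be a vertex-covering partition of G with causal expansion S'_i = S_i ∪ ∂_out(S_i) (boundaries taken in G). Then for every unshielded collider u → v ← w in G* there exists i such that {u, v, w} ⊆ S'_i. -/
/-- The outer vertex boundary of a set `S` in an undirected graph `G`. -/
def outBoundary {V : Type*} (G : SimpleGraph V) (S : Set V) : Set V :=
  {v | v ∉ S ∧ ∃ u ∈ S, G.Adj u v}

theorem mem_union_outBoundary_of_adj {V : Type*} {G : SimpleGraph V} {S : Set V} {u v : V}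
    (hv : v ∈ S) (hadj : G.Adj v u) : u ∈ S ∪ outBoundary G S := by
  by_cases hu : u ∈ S
  · exact Or.inl hu
  · exact Or.inr ⟨hu, v, hv, hadj⟩

theorem stmt6_general {V : Type*} (E : V → V → Prop)
    (G : SimpleGraph V)
    (hsuper : ∀ u v, E u v → G.Adj u v)
    (N : ℕ) (S : Fin N → Set V)
    (hcover : (⋃ i, S i) = Set.univ)
    (u v w : V) (huv : E u v) (hwv : E w v) :
    ∃ i, u ∈ S i ∪ outBoundary G (S i) ∧ v ∈ S i ∪ outBoundary G (S i) ∧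
      w ∈ S i ∪ outBoundary G (S i) := by
  obtain ⟨i, hvi⟩ := Set.mem_iUnion.mp (hcover ▸ Set.mem_univ v)
  exact ⟨i, mem_union_outBoundary_of_adj hvi (hsuper u v huv).symm, Or.inl hvi,
    mem_union_outBoundary_of_adj hvi (hsuper w v hwv).symm⟩

/-- Let `E` be a DAG whose underlying undirected graph is a subgraph of an
undirected superstructure `G` on the same vertices, and `{S_1, …, S_N}` a
vertex-covering partition of `G` with causal expansion `S'_i = S_i ∪ ∂_out(S_i)`.
Then every unshielded collider `u → v ← w` of the DAG has `{u, v, w} ⊆ S'_i`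
for some `i`. -/
theorem stmt6 {V : Type*} (E : V → V → Prop)
    (hacyc : ∀ x, ¬ Relation.TransGen E x x)
    (G : SimpleGraph V)
    (hsuper : ∀ u v, E u v → G.Adj u v)
    (N : ℕ) (S : Fin N → Set V)
    (hcover : (⋃ i, S i) = Set.univ)
    (u v w : V) (huv : E u v) (hwv : E w v) (hne : u ≠ w)
    (hunshielded : ¬ (E u w ∨ E w u)) :
    ∃ i, u ∈ S i ∪ outBoundary G (S i) ∧ v ∈ S i ∪ outBoundary G (S i) ∧
      w ∈ S i ∪ outBoundary G (S i) :=
  stmt6_general E G hsuper N S hcover u v w huv hwv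
end

section
/- Let Π = (u, q_1, ..., q_k, v) be an inducing path in DAG G* relative to V \ S with both a prefix {u, q_1} ⊆ S and suffix {q_k, v} ⊆ S where q_1, q_k are distinct non-endpoints. Then u is an ancestor of q_1, q_1 is an ancestor of v, v is an ancestor of q_k, and q_k is an ancestor of u in G*; hence G* contains a cycle, contradiction. Therefore no such inducing path exists when u and v are non-adjacent in G*. -/
namespace InducingCond

open Relation

variable {V : Type*} {E : V → V → Prop} {S : Set V} {n : ℕ} {π : ℕ → V}

theorem transGen_first_second (h : InducingCond E S n π) (hn : 1 < n) (hq : π 1 ∈ S) :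
    TransGen E (π 0) (π 1) :=
  .single (h 1 one_pos hn hq).1.1

theorem transGen_second_last (hacyc : ∀ x, ¬ TransGen E x x) (h : InducingCond E S n π)
    (hn : 1 < n) (hq : π 1 ∈ S) : TransGen E (π 1) (π n) :=
  (h 1 one_pos hn hq).2.resolve_left fun h10 ↦
    hacyc _ ((h.transGen_first_second hn hq).trans h10)

theorem transGen_last_penultimate (h : InducingCond E S n π) (hn : 1 < n)
    (hq : π (n - 1) ∈ S) : TransGen E (π n) (π (n - 1)) := by
  have hsucc : n - 1 + 1 = n := by omega
  have := (h (n - 1) (by omega) (by omega) hq).1.2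
  rw [hsucc] at this
  exact .single this

theorem transGen_penultimate_first (hacyc : ∀ x, ¬ TransGen E x x) (h : InducingCond E S n π)
    (hn : 1 < n) (hq : π (n - 1) ∈ S) : TransGen E (π (n - 1)) (π 0) :=
  (h (n - 1) (by omega) (by omega) hq).2.resolve_right fun hk ↦
    hacyc _ ((h.transGen_last_penultimate hn hq).trans hk)

end InducingCond

theorem stmt17_general {V : Type*} (E : V → V → Prop) (S : Set V)
    (hacyc : ∀ x, ¬ Relation.TransGen E x x)
    (n : ℕ) (hn : 3 ≤ n) (π : ℕ → V)
    (hq1 : π 1 ∈ S) (hqk : π (n - 1) ∈ S) :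
    ¬ InducingCond E S n π := by
  intro h
  have h1n : 1 < n := by omega
  exact hacyc (π 0) <| (h.transGen_first_second h1n hq1).trans <|
    (h.transGen_second_last hacyc h1n hq1).trans <|
    (h.transGen_last_penultimate h1n hqk).trans (h.transGen_penultimate_first hacyc h1n hqk)

/-- An inducing path `(u, q_1, …, q_k, v)` relative to `V \ S` with prefix
`{u, q_1} ⊆ S` and suffix `{q_k, v} ⊆ S`, `q_1 ≠ q_k` non-endpoints, would
give `u` ancestor of `q_1`, `q_1` of `v`, `v` of `q_k`, `q_k` of `u` — a
directed cycle. Hence no such inducing path exists between non-adjacent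
`u, v`. -/
theorem stmt17 {V : Type*} (E : V → V → Prop) (S : Set V)
    (hacyc : ∀ x, ¬ Relation.TransGen E x x)
    (u v : V) (hu : u ∈ S) (hv : v ∈ S)
    (hnadj : ¬ (E u v ∨ E v u))
    (n : ℕ) (hn : 3 ≤ n) (π : ℕ → V)
    (h0 : π 0 = u) (hend : π n = v)
    (hinj : ∀ i ≤ n, ∀ j ≤ n, π i = π j → i = j)
    (hadj : ∀ i < n, E (π i) (π (i + 1)) ∨ E (π (i + 1)) (π i))
    (hq1 : π 1 ∈ S) (hqk : π (n - 1) ∈ S) (hne : π 1 ≠ π (n - 1)) :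
    ¬ InducingCond E S n π :=
  stmt17_general E S hacyc n hn π hq1 hqk
end
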